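/- arXiv:2207.02366 — 5 statements merged into one kernel-verified Lean document; each statement's English description precedes it below -/
import Mathlib

section
/- (Generalised Cheng–Graham / Kusmin–Landau lemma) Let f be a real-valued function with a monotonic and continuous derivative on [a, b), and suppose there exist real numbers U, V > 1 and an integer ℓ such that ℓ + 1/U ≤ f'(x) ≤ ℓ + 1 − 1/V for all x ∈ [a, b). Then |∑_{a ≤ n < b} e(f(n))| ≤ (U + V)/π, where the sum runs over integers n with a ≤ n < b. -/
/-!
Put `e n = e(f n)` and `θ n = f (n + 1) - f n - ℓ`. By the mean value theorem `θ n` is a value of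
`f' - ℓ`, so it lies in `[1/U, 1 - 1/V]` and is monotone in `n`. As `e (n + 1) = e(θ n) e n`, each
term is `e n = (e (n + 1) - e n) w(θ n)` with `w t = (e(t) - 1)⁻¹ = -(1 + i cot πt) / 2`.
Summation by parts leaves two boundary terms of norm `1 / (2 sin πθ)` and the sum of
`|Δ cot (πθ n)| / 2`, which telescopes because `θ` is monotone. The elementary bounds
`(1 ± cos x) / (2 sin x) ≤ 1 / x`, `1 / (π - x)` on `(0, π)` then give `(U + V) / π`.
-/

open Real

namespace KusminLandau

theorem inv_two_mul_sin_add_cot_div_two_le {x : ℝ} (hx0 : 0 < x) (hxπ : x < π) :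
    (2 * sin x)⁻¹ + cot x / 2 ≤ x⁻¹ := by
  have hc : 0 < cos (x / 2) := cos_pos_of_mem_Ioo ⟨by linarith [pi_pos], by linarith⟩
  have hs : 0 < sin (x / 2) := sin_pos_of_pos_of_lt_pi (by linarith) (by linarith [pi_pos])
  have htan : x / 2 ≤ sin (x / 2) / cos (x / 2) := by
    rw [← tan_eq_sin_div_cos]; exact le_tan (by linarith) (by linarith)
  rw [le_div_iff₀ hc] at htan
  have hsin : sin x = 2 * sin (x / 2) * cos (x / 2) := by rw [← sin_two_mul]; ring_nf
  have hcos : cos x = 2 * cos (x / 2) ^ 2 - 1 := by rw [← cos_two_mul]; ring_nf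
  rw [cot_eq_cos_div_sin, hsin, hcos]
  field_simp
  nlinarith

theorem inv_two_mul_sin_sub_cot_div_two_le {x : ℝ} (hx0 : 0 < x) (hxπ : x < π) :
    (2 * sin x)⁻¹ - cot x / 2 ≤ (π - x)⁻¹ := by
  have h := inv_two_mul_sin_add_cot_div_two_le (x := π - x) (by linarith) (by linarith)
  simpa only [cot_eq_cos_div_sin, sin_pi_sub, cos_pi_sub, neg_div, ← sub_eq_add_neg] using h

theorem cot_antitoneOn : AntitoneOn cot (Set.Ioo 0 π) := by
  intro s ⟨hs0, hsπ⟩ t ⟨ht0, htπ⟩ hst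
  have hsin_s : 0 < sin s := sin_pos_of_pos_of_lt_pi hs0 hsπ
  have hsin_t : 0 < sin t := sin_pos_of_pos_of_lt_pi ht0 htπ
  have h : 0 ≤ sin (t - s) := sin_nonneg_of_nonneg_of_le_pi (by linarith) (by linarith)
  rw [sin_sub] at h
  rw [cot_eq_cos_div_sin, cot_eq_cos_div_sin, div_le_div_iff₀ hsin_t hsin_s]
  linarith

open Complex

theorem norm_exp_two_pi_I_mul_sub_one (t : ℝ) :
    ‖cexp (2 * π * I * t) - 1‖ = 2 * |Real.sin (π * t)| := by
  rw [show 2 * π * I * t = I * ((2 * π * t : ℝ) : ℂ) by push_cast; ring,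
    norm_exp_I_mul_ofReal_sub_one, norm_mul, Real.norm_eq_abs, Real.norm_eq_abs, abs_two]
  ring_nf

noncomputable def invExpSubOne (t : ℝ) : ℂ := (cexp (2 * π * I * t) - 1)⁻¹

variable {t : ℝ}

theorem exp_sub_one_mul_invExpSubOne (h : Real.sin (π * t) ≠ 0) :
    (cexp (2 * π * I * t) - 1) * invExpSubOne t = 1 := by
  refine mul_inv_cancel₀ fun h0 => h ?_
  have := norm_exp_two_pi_I_mul_sub_one t
  rw [h0, norm_zero] at this
  exact abs_eq_zero.mp (by linarith)

theorem invExpSubOne_eq (h : Real.sin (π * t) ≠ 0) :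
    invExpSubOne t = -(1 + Real.cot (π * t) * I) / 2 := by
  refine inv_eq_of_mul_eq_one_right ?_
  have he : cexp (2 * π * I * t) = (Real.cos (π * t) + Real.sin (π * t) * I) ^ 2 := by
    rw [ofReal_cos, ofReal_sin, ← exp_mul_I, ← Complex.exp_nat_mul]; push_cast; ring_nf
  have hs : (Real.sin (π * t) : ℂ) ≠ 0 := by exact_mod_cast h
  have hsc : (Real.sin (π * t) : ℂ) ^ 2 + (Real.cos (π * t) : ℂ) ^ 2 = 1 := by
    exact_mod_cast Real.sin_sq_add_cos_sq (π * t)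
  rw [he, Real.cot_eq_cos_div_sin, ofReal_div]
  generalize (Real.sin (π * t) : ℂ) = s at hs hsc ⊢
  generalize (Real.cos (π * t) : ℂ) = c at hsc ⊢
  field_simp
  linear_combination (s - c * I) * hsc - (s ^ 3 + s ^ 2 * c * I + 2 * c ^ 2 * s) * I_sq

theorem norm_invExpSubOne (h0 : 0 < Real.sin (π * t)) :
    ‖invExpSubOne t‖ = (2 * Real.sin (π * t))⁻¹ := by
  rw [invExpSubOne, norm_inv, norm_exp_two_pi_I_mul_sub_one, abs_of_pos h0]

theorem norm_one_add_invExpSubOne (h : Real.sin (π * t) ≠ 0) :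
    ‖1 + invExpSubOne t‖ = ‖invExpSubOne t‖ := by
  have h1 : 1 + invExpSubOne t = cexp ((2 * π * t : ℝ) * I) * invExpSubOne t := by
    rw [show ((2 * π * t : ℝ) : ℂ) * I = 2 * π * I * t by push_cast; ring]
    linear_combination -exp_sub_one_mul_invExpSubOne h
  rw [h1, norm_mul, norm_exp_ofReal_mul_I, one_mul]

theorem invExpSubOne_sub_invExpSubOne {s : ℝ} (hs : Real.sin (π * s) ≠ 0)
    (ht : Real.sin (π * t) ≠ 0) :
    invExpSubOne s - invExpSubOne t = ((Real.cot (π * t) - Real.cot (π * s)) / 2 : ℝ) * I := by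
  rw [invExpSubOne_eq hs, invExpSubOne_eq ht]; push_cast; ring

open Finset

theorem sum_range_sub_mul_eq {R : Type*} [CommRing R] (z w : ℕ → R) (K : ℕ) :
    ∑ k ∈ range (K + 1), (z (k + 1) - z k) * w k =
      z (K + 1) * w K - z 0 * w 0 + ∑ k ∈ range K, z (k + 1) * (w k - w (k + 1)) := by
  induction K with
  | zero => simp only [zero_add, sum_range_one, range_zero, sum_empty]; ring
  | succ K ih => rw [sum_range_succ, ih, sum_range_succ]; ring

theorem sum_range_abs_sub_of_monotoneOn {c : ℕ → ℝ} {K : ℕ} (h : MonotoneOn c (Set.Iic K)) :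
    ∑ k ∈ range K, |c (k + 1) - c k| = |c K - c 0| := by
  have hle : ∀ k ≤ K, c 0 ≤ c k := fun k hk => h (Nat.zero_le K) hk (Nat.zero_le k)
  rw [abs_of_nonneg (sub_nonneg.2 (hle K le_rfl)), ← sum_range_sub]
  refine sum_congr rfl fun k hk => abs_of_nonneg (sub_nonneg.2 (h ?_ ?_ k.le_succ))
  all_goals simp only [Set.mem_Iic]; have := mem_range.1 hk; omega

theorem sum_range_abs_sub {c : ℕ → ℝ} {K : ℕ}
    (h : MonotoneOn c (Set.Iic K) ∨ AntitoneOn c (Set.Iic K)) :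
    ∑ k ∈ range K, |c (k + 1) - c k| = |c K - c 0| := by
  rcases h with h | h
  · exact sum_range_abs_sub_of_monotoneOn h
  · simpa only [neg_sub_neg, abs_sub_comm] using sum_range_abs_sub_of_monotoneOn h.neg

theorem norm_sum_le_of_succ_eq_exp_mul (z : ℕ → ℂ) (θ : ℕ → ℝ) (K : ℕ) (hz : ∀ k, ‖z k‖ = 1)
    (hstep : ∀ k ≤ K, z (k + 1) = cexp (2 * π * I * θ k) * z k)
    (hθ : ∀ k ≤ K, θ k ∈ Set.Ioo 0 1)
    (hmono : MonotoneOn θ (Set.Iic K) ∨ AntitoneOn θ (Set.Iic K)) :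
    ‖∑ k ∈ range (K + 2), z k‖ ≤ (2 * Real.sin (π * θ 0))⁻¹ + (2 * Real.sin (π * θ K))⁻¹
      + |Real.cot (π * θ K) - Real.cot (π * θ 0)| / 2 := by
  set w := fun k => invExpSubOne (θ k)
  have hθπ : Set.MapsTo (fun k => π * θ k) (Set.Iic K) (Set.Ioo 0 π) := fun k hk =>
    ⟨mul_pos pi_pos (hθ k hk).1, mul_lt_of_lt_one_right pi_pos (hθ k hk).2⟩
  have hsin : ∀ k ≤ K, 0 < Real.sin (π * θ k) := fun k hk => sin_pos_of_pos_of_lt_pi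
    (hθπ (Set.mem_Iic.2 hk)).1 (hθπ (Set.mem_Iic.2 hk)).2
  have hz_eq : ∀ k ∈ range (K + 1), z k = (z (k + 1) - z k) * w k := fun k hk => by
    have hk : k ≤ K := Nat.lt_succ_iff.1 (mem_range.1 hk)
    rw [hstep k hk]
    linear_combination -z k * exp_sub_one_mul_invExpSubOne (hsin k hk).ne'
  have habel : ∑ k ∈ range (K + 2), z k = z (K + 1) * (1 + w K) - z 0 * w 0
      + ∑ k ∈ range K, z (k + 1) * (w k - w (k + 1)) := by
    rw [sum_range_succ, sum_congr rfl hz_eq, sum_range_sub_mul_eq]; ring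
  have hcot : MonotoneOn (fun k => Real.cot (π * θ k)) (Set.Iic K) ∨
      AntitoneOn (fun k => Real.cot (π * θ k)) (Set.Iic K) := by
    have hπ : Monotone (π * ·) := monotone_mul_left_of_nonneg pi_pos.le
    rcases hmono with h | h
    · exact .inr (cot_antitoneOn.comp_MonotoneOn (hπ.comp_monotoneOn h) hθπ)
    · exact .inl (cot_antitoneOn.comp (hπ.comp_antitoneOn h) hθπ)
  have hsum : ‖∑ k ∈ range K, z (k + 1) * (w k - w (k + 1))‖
      ≤ |Real.cot (π * θ K) - Real.cot (π * θ 0)| / 2 := by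
    refine (norm_sum_le _ _).trans_eq ?_
    rw [← sum_range_abs_sub hcot, sum_div]
    refine sum_congr rfl fun k hk => ?_
    have hk : k < K := mem_range.1 hk
    rw [norm_mul, hz, one_mul, invExpSubOne_sub_invExpSubOne (hsin k hk.le).ne'
      (hsin (k + 1) hk).ne', norm_mul, norm_I, mul_one, norm_real, Real.norm_eq_abs, abs_div,
      abs_two]
  calc _ ≤ ‖z (K + 1) * (1 + w K)‖ + ‖z 0 * w 0‖
        + ‖∑ k ∈ range K, z (k + 1) * (w k - w (k + 1))‖ := by
        rw [habel]; exact (norm_add_le _ _).trans (add_le_add_left (norm_sub_le _ _) _)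
    _ ≤ _ := by
      rw [norm_mul, norm_mul, hz, hz, one_mul, one_mul, norm_one_add_invExpSubOne
        (hsin K le_rfl).ne', norm_invExpSubOne (hsin K le_rfl), norm_invExpSubOne
        (hsin 0 (Nat.zero_le K))]
      linarith

theorem inv_two_mul_sin_add_abs_cot_sub_le {U V s t : ℝ} (hU : 0 < U) (hV : 0 < V)
    (hs : s ∈ Set.Icc U⁻¹ (1 - V⁻¹)) (ht : t ∈ Set.Icc U⁻¹ (1 - V⁻¹)) :
    (2 * Real.sin (π * s))⁻¹ + (2 * Real.sin (π * t))⁻¹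
      + |Real.cot (π * t) - Real.cot (π * s)| / 2 ≤ (U + V) / π := by
  have key : ∀ x ∈ Set.Icc U⁻¹ (1 - V⁻¹), (2 * Real.sin (π * x))⁻¹ + Real.cot (π * x) / 2 ≤ U / π
      ∧ (2 * Real.sin (π * x))⁻¹ - Real.cot (π * x) / 2 ≤ V / π := by
    rintro x ⟨hxU, hxV⟩
    have hUx : π * U⁻¹ ≤ π * x := mul_le_mul_of_nonneg_left hxU pi_pos.le
    have hVx : π * V⁻¹ ≤ π - π * x := by nlinarith [pi_pos]
    have hpos : 0 < π * U⁻¹ := by positivity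
    have hx0 : 0 < π * x := hpos.trans_le hUx
    have hx1 : π * x < π := by nlinarith [inv_pos.2 hV, pi_pos]
    constructor
    · calc _ ≤ (π * x)⁻¹ := inv_two_mul_sin_add_cot_div_two_le hx0 hx1
        _ ≤ (π * U⁻¹)⁻¹ := inv_anti₀ hpos hUx
        _ = U / π := by field_simp
    · calc _ ≤ (π - π * x)⁻¹ := inv_two_mul_sin_sub_cot_div_two_le hx0 hx1
        _ ≤ (π * V⁻¹)⁻¹ := inv_anti₀ (by positivity) hVx
        _ = V / π := by field_simp
  obtain ⟨hs₁, hs₂⟩ := key s hs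
  obtain ⟨ht₁, ht₂⟩ := key t ht
  rw [add_div]
  rcases abs_cases (Real.cot (π * t) - Real.cot (π * s)) with ⟨h, -⟩ | ⟨h, -⟩ <;> rw [h] <;>
    linarith

theorem four_le_add_of_inv_add_inv_le_one {U V : ℝ} (hU : 0 < U) (hV : 0 < V)
    (h : U⁻¹ + V⁻¹ ≤ 1) : 4 ≤ U + V := by
  rw [inv_add_inv hU.ne' hV.ne', div_le_one (by positivity)] at h
  nlinarith [sq_nonneg (U - V)]

theorem exp_two_pi_I_mul_add_int (x : ℝ) (n : ℤ) :
    cexp (2 * π * I * (x + n : ℝ)) = cexp (2 * π * I * x) := by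
  rw [ofReal_add, mul_add, Complex.exp_add, ofReal_intCast, mul_comm _ (n : ℂ),
    exp_int_mul_two_pi_mul_I, mul_one]

theorem norm_exp_two_pi_I_mul (x : ℝ) : ‖cexp (2 * π * I * x)‖ = 1 := by
  rw [show 2 * π * I * x = (2 * π * x : ℝ) * I by push_cast; ring, norm_exp_ofReal_mul_I]

theorem norm_sum_range_exp_le (φ : ℕ → ℝ) (K : ℕ) (ℓ : ℤ) {U V : ℝ} (hU : 0 < U) (hV : 0 < V)
    (hUV : U⁻¹ + V⁻¹ ≤ 1)
    (hΔ : ∀ k, k + 1 < K → φ (k + 1) - φ k ∈ Set.Icc (ℓ + U⁻¹) (ℓ + 1 - V⁻¹))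
    (hmono : MonotoneOn (fun k => φ (k + 1) - φ k) {k | k + 1 < K} ∨
      AntitoneOn (fun k => φ (k + 1) - φ k) {k | k + 1 < K}) :
    ‖∑ k ∈ range K, cexp (2 * π * I * φ k)‖ ≤ (U + V) / π := by
  match K, hΔ, hmono with
  | 0, _, _ =>
    rw [sum_range_zero, norm_zero]; positivity
  | 1, _, _ =>
    rw [sum_range_one, norm_exp_two_pi_I_mul, one_le_div pi_pos]
    linarith [pi_lt_four, four_le_add_of_inv_add_inv_le_one hU hV hUV]
  | K + 2, hΔ, hmono =>
    set θ := fun k => φ (k + 1) - φ k - ℓ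
    have hIic : {k | k + 1 < K + 2} = Set.Iic K := by
      ext; simp only [Set.mem_ofPred_eq, Set.mem_Iic]; omega
    have hθ : ∀ k ≤ K, θ k ∈ Set.Icc U⁻¹ (1 - V⁻¹) := fun k hk => by
      obtain ⟨h₁, h₂⟩ := hΔ k (by omega)
      constructor <;> simp only [θ] <;> linarith
    refine (norm_sum_le_of_succ_eq_exp_mul _ θ K (fun k => norm_exp_two_pi_I_mul _) (fun k _ => ?_)
      (fun k hk => ⟨(inv_pos.2 hU).trans_le (hθ k hk).1, (hθ k hk).2.trans_lt
        (sub_lt_self 1 (inv_pos.2 hV))⟩) ?_).trans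
      (inv_two_mul_sin_add_abs_cot_sub_le hU hV (hθ 0 (Nat.zero_le K)) (hθ K le_rfl))
    · have hφ : φ (k + 1) = θ k + φ k + ℓ := by simp only [θ]; ring
      rw [hφ, exp_two_pi_I_mul_add_int, ofReal_add, mul_add, Complex.exp_add]
    · rw [hIic] at hmono
      exact hmono.imp (fun h => h.add_const _) (fun h => h.add_const _)

section Continuous

variable {f f' : ℝ → ℝ} {a b : ℝ}

theorem hasDerivAt_sub_shift (hderiv : ∀ x ∈ Set.Ico a b, HasDerivAt f (f' x) x) {x : ℝ}
    (hx : x ∈ Set.Ico a (b - 1)) :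
    HasDerivAt (fun y => f (y + 1) - f y) (f' (x + 1) - f' x) x :=
  ((hderiv (x + 1) ⟨by linarith [hx.1], by linarith [hx.2]⟩).comp_add_const x 1).sub
    (hderiv x ⟨hx.1, by linarith [hx.2]⟩)

theorem exists_sub_shift_eq_deriv (hderiv : ∀ x ∈ Set.Ico a b, HasDerivAt f (f' x) x) {x : ℝ}
    (hx : x ∈ Set.Ico a (b - 1)) : ∃ ξ ∈ Set.Ico a b, f (x + 1) - f x = f' ξ := by
  have hsub : Set.Icc x (x + 1) ⊆ Set.Ico a b := fun y hy =>
    ⟨hx.1.trans hy.1, by linarith [hx.2, hy.2]⟩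
  obtain ⟨ξ, hξ, h⟩ := exists_hasDerivAt_eq_slope f f' (lt_add_one x)
    (fun y hy => (hderiv y (hsub hy)).continuousAt.continuousWithinAt)
    (fun y hy => hderiv y (hsub (Set.Ioo_subset_Icc_self hy)))
  exact ⟨ξ, hsub (Set.Ioo_subset_Icc_self hξ), by rw [h, add_sub_cancel_left, div_one]⟩

theorem monotoneOn_sub_shift_or_antitoneOn (hderiv : ∀ x ∈ Set.Ico a b, HasDerivAt f (f' x) x)
    (hmono : MonotoneOn f' (Set.Ico a b) ∨ AntitoneOn f' (Set.Ico a b)) :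
    MonotoneOn (fun x => f (x + 1) - f x) (Set.Ico a (b - 1)) ∨
      AntitoneOn (fun x => f (x + 1) - f x) (Set.Ico a (b - 1)) := by
  have hd := fun x (hx : x ∈ Set.Ico a (b - 1)) => hasDerivAt_sub_shift hderiv hx
  have hcont : ContinuousOn (fun x => f (x + 1) - f x) (Set.Ico a (b - 1)) := fun x hx =>
    (hd x hx).continuousAt.continuousWithinAt
  have hdiff : DifferentiableOn ℝ (fun x => f (x + 1) - f x) (interior (Set.Ico a (b - 1))) :=
    fun x hx => (hd x (interior_subset hx)).differentiableAt.differentiableWithinAt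
  have hmem : ∀ x ∈ interior (Set.Ico a (b - 1)), x ∈ Set.Ico a b ∧ x + 1 ∈ Set.Ico a b := by
    rw [interior_Ico]
    exact fun x hx => ⟨⟨hx.1.le, by linarith [hx.2]⟩, ⟨by linarith [hx.1], by linarith [hx.2]⟩⟩
  rcases hmono with h | h
  · refine .inl (monotoneOn_of_deriv_nonneg (convex_Ico _ _) hcont hdiff fun x hx => ?_)
    rw [(hd x (interior_subset hx)).deriv, sub_nonneg]
    exact h (hmem x hx).1 (hmem x hx).2 (by linarith)
  · refine .inr (antitoneOn_of_deriv_nonpos (convex_Ico _ _) hcont hdiff fun x hx => ?_)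
    rw [(hd x (interior_subset hx)).deriv, sub_nonpos]
    exact h (hmem x hx).1 (hmem x hx).2 (by linarith)

end Continuous

theorem sum_Ico_int_eq_sum_range {M : Type*} [AddCommMonoid M] (g : ℤ → M) (m n : ℤ) :
    ∑ i ∈ Ico m n, g i = ∑ k ∈ range (n - m).toNat, g (m + k) := by
  rw [Int.Ico_eq_finset_map, sum_map]; rfl

theorem ceil_add_mem_Ico {a b : ℝ} {k : ℕ} (hk : k + 1 < (⌈b⌉ - ⌈a⌉).toNat) :
    (⌈a⌉ + k : ℝ) ∈ Set.Ico a (b - 1) := by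
  have h : ⌈a⌉ + k + 2 ≤ ⌈b⌉ := by omega
  have h' : (⌈a⌉ + k + 2 : ℝ) ≤ ⌈b⌉ := by exact_mod_cast h
  exact ⟨(Int.le_ceil a).trans (le_add_of_nonneg_right k.cast_nonneg), by
    linarith [Int.ceil_lt_add_one b]⟩

end KusminLandau

open Complex KusminLandau

theorem kusmin_landau_general (a b : ℝ) (f f' : ℝ → ℝ) (U V : ℝ) (ℓ : ℤ)
    (hU : 1 < U) (hV : 1 < V)
    (hderiv : ∀ x ∈ Set.Ico a b, HasDerivAt f (f' x) x)
    (hmono : MonotoneOn f' (Set.Ico a b) ∨ AntitoneOn f' (Set.Ico a b))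
    (hlo : ∀ x ∈ Set.Ico a b, (ℓ : ℝ) + U⁻¹ ≤ f' x)
    (hhi : ∀ x ∈ Set.Ico a b, f' x ≤ (ℓ : ℝ) + 1 - V⁻¹) :
    ‖(∑ n ∈ Finset.Ico ⌈a⌉ ⌈b⌉,
        Complex.exp (2 * Real.pi * Complex.I * (f n)))‖ ≤ (U + V) / Real.pi := by
  rcases le_or_gt b a with hba | hab
  · rw [Finset.Ico_eq_empty_of_le (Int.ceil_mono hba), Finset.sum_empty, norm_zero]
    exact div_nonneg (by linarith) pi_pos.le
  have hUV : U⁻¹ + V⁻¹ ≤ 1 := by linarith [hlo a ⟨le_rfl, hab⟩, hhi a ⟨le_rfl, hab⟩]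
  have hshift : ∀ k : ℕ, f (⌈a⌉ + (k + 1 : ℕ)) - f (⌈a⌉ + k) = f (⌈a⌉ + k + 1) - f (⌈a⌉ + k) :=
    fun k => by rw [Nat.cast_succ, add_assoc]
  have hmaps : Set.MapsTo (fun k : ℕ => (⌈a⌉ + k : ℝ)) {k | k + 1 < (⌈b⌉ - ⌈a⌉).toNat}
      (Set.Ico a (b - 1)) := fun _ => ceil_add_mem_Ico
  have hι : MonotoneOn (fun k : ℕ => (⌈a⌉ + k : ℝ)) {k | k + 1 < (⌈b⌉ - ⌈a⌉).toNat} :=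
    fun _ _ _ _ h => by simpa using h
  rw [sum_Ico_int_eq_sum_range]
  push_cast
  refine norm_sum_range_exp_le (fun k => f (⌈a⌉ + k)) _ ℓ (by linarith) (by linarith) hUV
    (fun k hk => ?_) ?_ <;> simp only [hshift]
  · obtain ⟨ξ, hξ, h⟩ := exists_sub_shift_eq_deriv hderiv (hmaps hk)
    exact h ▸ ⟨hlo ξ hξ, hhi ξ hξ⟩
  · exact (monotoneOn_sub_shift_or_antitoneOn hderiv hmono).imp (·.comp hι hmaps)
      (·.comp_MonotoneOn hι hmaps)

theorem kusmin_landau (a b : ℝ) (f f' : ℝ → ℝ) (U V : ℝ) (ℓ : ℤ)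
    (hU : 1 < U) (hV : 1 < V)
    (hderiv : ∀ x ∈ Set.Ico a b, HasDerivAt f (f' x) x)
    (hcont : ContinuousOn f' (Set.Ico a b))
    (hmono : MonotoneOn f' (Set.Ico a b) ∨ AntitoneOn f' (Set.Ico a b))
    (hlo : ∀ x ∈ Set.Ico a b, (ℓ : ℝ) + U⁻¹ ≤ f' x)
    (hhi : ∀ x ∈ Set.Ico a b, f' x ≤ (ℓ : ℝ) + 1 - V⁻¹) :
    ‖(∑ n ∈ Finset.Ico ⌈a⌉ ⌈b⌉,
        Complex.exp (2 * Real.pi * Complex.I * (f n)))‖ ≤ (U + V) / Real.pi :=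
  kusmin_landau_general a b f f' U V ℓ hU hV hderiv hmono hlo hhi
end

section
/- (Weyl differencing) Let f be a real-valued function on the integers, let L and M be positive integers, and let N be an integer. Define s'_m(L) := ∑_{n=N+1}^{N+L−m} e(f(n+m) − f(n)) if m < L, and s'_m(L) := 0 if m ≥ L. Then |∑_{n=N+1}^{N+L} e(f(n))|² ≤ ((L + M − 1)/M) · (L + 2 · ∑_{m=1}^{M} (1 − m/M) · |s'_m(L)|). -/
/-!
If `a : ℤ → ℂ` vanishes off an interval of length `L`, then each of the `M` shifts
`n ↦ a (n + m)`, `m < M`, has the same sum, so `M • ∑ a` is the sum of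
`g n = ∑_{m < M} a (n + m)` over a window `T` of `L + M - 1` points. Cauchy–Schwarz over `T`
bounds `M² ‖∑ a‖²` by `#T ∑_T ‖g‖²`, and expanding `‖g n‖²` gives a double sum over
`m₁, m₂ < M` of the autocorrelation of `a` at lag `|m₁ - m₂|`; the lag `d ≥ 1` occurs
`2 (M - d)` times. For `a = e ∘ f` on `(N, N + L]` the lag-`d` autocorrelation is `s'_d`,
and the lag-`0` one is `L`.
-/

open Complex Real Finset ComplexConjugate

theorem Finset.sum_comp_add_of_support_subset {G β : Type*} [AddGroup G] [AddCommMonoid β]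
    {I J : Finset G} {f : G → β} (c : G) (hf : ∀ n ∉ I, f n = 0) (hIJ : ∀ n ∈ I, n - c ∈ J) :
    ∑ n ∈ J, f (n + c) = ∑ n ∈ I, f n := by
  refine (sum_map J (addRightEmbedding c) f).symm.trans ?_
  refine (sum_subset (fun n hn => mem_map.2 ⟨n - c, hIJ n hn, sub_add_cancel n c⟩) ?_).symm
  exact fun n _ hn => hf n hn

theorem sum_range_sum_range_dist {R : Type*} [CommRing R] (h : ℕ → R) (M : ℕ) :
    ∑ m₁ ∈ range M, ∑ m₂ ∈ range M, h (Nat.dist m₁ m₂) =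
      M * h 0 + 2 * ∑ d ∈ Icc 1 M, ((M : R) - d) * h d := by
  induction M with
  | zero => simp
  | succ M ih =>
    have hrow : ∑ m ∈ range M, h (Nat.dist M m) = ∑ d ∈ Icc 1 M, h d := by
      rw [← sum_range_reflect, ← Ico_add_one_right_eq_Icc, sum_Ico_eq_sum_range]
      refine sum_congr rfl fun m hm => congrArg h ?_
      rw [mem_range] at hm
      rw [Nat.dist_eq_sub_of_le_right (by omega)]
      omega
    have hcol : ∑ m ∈ range M, h (Nat.dist m M) = ∑ d ∈ Icc 1 M, h d := by
      simpa only [Nat.dist_comm] using hrow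
    simp only [sum_range_succ, sum_add_distrib, ih, hrow, hcol, Nat.dist_self,
      sum_Icc_succ_top (Nat.le_add_left 1 M)]
    push_cast
    simp only [sub_self, zero_mul, add_zero, add_sub_right_comm _ (1 : R), add_mul, one_mul,
      sum_add_distrib]
    ring

theorem sum_norm_sq_sum_le_sum_sum_norm {ι κ 𝕜 : Type*} [RCLike 𝕜] (s : Finset κ) (T : Finset ι)
    (x : κ → ι → 𝕜) :
    ∑ n ∈ T, ‖∑ m ∈ s, x m n‖ ^ 2 ≤
      ∑ m₁ ∈ s, ∑ m₂ ∈ s, ‖∑ n ∈ T, x m₁ n * starRingEnd 𝕜 (x m₂ n)‖ := by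
  have hexpand : ((∑ n ∈ T, ‖∑ m ∈ s, x m n‖ ^ 2 : ℝ) : 𝕜) =
      ∑ m₁ ∈ s, ∑ m₂ ∈ s, ∑ n ∈ T, x m₁ n * starRingEnd 𝕜 (x m₂ n) := by
    push_cast
    simp_rw [← RCLike.mul_conj, map_sum, sum_mul_sum]
    rw [sum_comm]
    exact sum_congr rfl fun _ _ => sum_comm
  calc ∑ n ∈ T, ‖∑ m ∈ s, x m n‖ ^ 2 = ‖((∑ n ∈ T, ‖∑ m ∈ s, x m n‖ ^ 2 : ℝ) : 𝕜)‖ := by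
        rw [RCLike.norm_ofReal, abs_of_nonneg (by positivity)]
    _ ≤ _ := hexpand ▸ (norm_sum_le _ _).trans (sum_le_sum fun _ _ => norm_sum_le _ _)

noncomputable def autocorr (I : Finset ℤ) (a : ℤ → ℂ) (d : ℕ) : ℂ :=
  ∑ n ∈ I, a (n + d) * conj (a n)

section
variable {I T : Finset ℤ} {a : ℤ → ℂ}

theorem sum_shift_mul_conj_shift_eq_autocorr (ha : ∀ n ∉ I, a n = 0) {m₁ m₂ : ℕ} (h : m₂ ≤ m₁)
    (hT : ∀ n ∈ I, n - m₂ ∈ T) :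
    ∑ n ∈ T, a (n + m₁) * conj (a (n + m₂)) = autocorr I a (m₁ - m₂) := by
  rw [autocorr, ← sum_comp_add_of_support_subset (m₂ : ℤ) (fun n hn => by simp [ha n hn]) hT]
  refine sum_congr rfl fun n _ => ?_
  push_cast [h]
  ring_nf

theorem norm_sum_shift_mul_conj_shift (ha : ∀ n ∉ I, a n = 0) {m₁ m₂ : ℕ}
    (hT₁ : ∀ n ∈ I, n - m₁ ∈ T) (hT₂ : ∀ n ∈ I, n - m₂ ∈ T) :
    ‖∑ n ∈ T, a (n + m₁) * conj (a (n + m₂))‖ = ‖autocorr I a (Nat.dist m₁ m₂)‖ := by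
  rcases le_total m₂ m₁ with h | h
  · rw [sum_shift_mul_conj_shift_eq_autocorr ha h hT₂, Nat.dist_eq_sub_of_le_right h]
  · rw [Nat.dist_eq_sub_of_le h, ← sum_shift_mul_conj_shift_eq_autocorr ha h hT₁, ← norm_conj,
      map_sum]
    simp_rw [map_mul, conj_conj, mul_comm]

theorem sq_mul_norm_sum_sq_le_autocorr {N : ℤ} {L : ℕ} (ha : ∀ n ∉ Icc (N + 1) (N + L), a n = 0)
    (M : ℕ) :
    (M : ℝ) ^ 2 * ‖∑ n ∈ Icc (N + 1) (N + L), a n‖ ^ 2 ≤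
      (L + M - 1 : ℕ) * (M * ‖autocorr (Icc (N + 1) (N + L)) a 0‖ +
        2 * ∑ d ∈ Icc 1 M, ((M : ℝ) - d) * ‖autocorr (Icc (N + 1) (N + L)) a d‖) := by
  set T := Icc (N + 2 - M) (N + L)
  have hT : ∀ m ∈ range M, ∀ n ∈ Icc (N + 1) (N + L), n - m ∈ T := by
    intro m hm n hn
    simp only [mem_range, mem_Icc, T] at hm hn ⊢
    omega
  have hcard : #T = L + M - 1 := by
    simp only [T, Int.card_Icc]
    omega
  have hsum : ∑ n ∈ T, ∑ m ∈ range M, a (n + m) = M * ∑ n ∈ Icc (N + 1) (N + L), a n := by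
    rw [sum_comm, sum_congr rfl fun m hm => sum_comp_add_of_support_subset _ ha (hT m hm)]
    simp
  calc (M : ℝ) ^ 2 * ‖∑ n ∈ Icc (N + 1) (N + L), a n‖ ^ 2
      = ‖∑ n ∈ T, ∑ m ∈ range M, a (n + m)‖ ^ 2 := by
        rw [hsum, norm_mul, Complex.norm_natCast, mul_pow]
    _ ≤ (∑ n ∈ T, ‖∑ m ∈ range M, a (n + m)‖) ^ 2 := by gcongr; exact norm_sum_le _ _
    _ ≤ #T * ∑ n ∈ T, ‖∑ m ∈ range M, a (n + m)‖ ^ 2 := sq_sum_le_card_mul_sum_sq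
    _ ≤ #T * ∑ m₁ ∈ range M, ∑ m₂ ∈ range M, ‖∑ n ∈ T, a (n + m₁) * conj (a (n + m₂))‖ := by
      gcongr
      exact sum_norm_sq_sum_le_sum_sum_norm (range M) T fun (m : ℕ) (n : ℤ) => a (n + m)
    _ = #T * ∑ m₁ ∈ range M, ∑ m₂ ∈ range M,
          ‖autocorr (Icc (N + 1) (N + L)) a (Nat.dist m₁ m₂)‖ := by
      refine congrArg _ (sum_congr rfl fun m₁ hm₁ => sum_congr rfl fun m₂ hm₂ => ?_)
      exact norm_sum_shift_mul_conj_shift ha (hT m₁ hm₁) (hT m₂ hm₂)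
    _ = _ := by
      rw [hcard, sum_range_sum_range_dist fun d => ‖autocorr (Icc (N + 1) (N + L)) a d‖]

end

theorem autocorr_indicator_Icc (b : ℤ → ℂ) (N : ℤ) (L m : ℕ) :
    autocorr (Icc (N + 1) (N + L)) ((Icc (N + 1) (N + L) : Set ℤ).indicator b) m =
      ∑ n ∈ Icc (N + 1) (N + L - m), b (n + m) * conj (b n) := by
  symm
  refine sum_subset_zero_on_sdiff (Icc_subset_Icc_right (by omega)) ?_ fun n hn => ?_
  · intro n hn
    simp only [mem_sdiff, mem_Icc] at hn
    simp [Set.indicator_of_notMem, show ¬(n + m ≤ N + L) by omega]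
  · simp only [mem_Icc] at hn
    rw [Set.indicator_of_mem (by simp; omega), Set.indicator_of_mem (by simp; omega)]

theorem exp_two_pi_I_mul_conj (x y : ℝ) :
    exp (2 * π * I * x) * conj (exp (2 * π * I * y)) = exp (2 * π * I * (x - y)) := by
  rw [← exp_conj, ← Complex.exp_add]
  congr 1
  simp only [map_mul, map_ofNat, conj_I, conj_ofReal]
  ring

theorem weyl_differencing_general (f : ℤ → ℝ) (L M : ℕ) (hM : 0 < M) (N : ℤ)
    (s' : ℕ → ℂ)
    (hs' : ∀ m : ℕ, s' m =
      if m < L then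
        ∑ n ∈ Finset.Icc (N + 1) (N + L - m),
          Complex.exp (2 * Real.pi * Complex.I * (f (n + m) - f n))
      else 0) :
    (‖∑ n ∈ Finset.Icc (N + 1) (N + L),
        Complex.exp (2 * Real.pi * Complex.I * (f n))‖) ^ 2 ≤
      ((L + M - 1 : ℝ) / M) *
        (L + 2 * ∑ m ∈ Finset.Icc 1 M, (1 - (m : ℝ) / M) * ‖s' m‖) := by
  set a := (Icc (N + 1) (N + L) : Set ℤ).indicator fun n => exp (2 * π * I * f n)
  have hcorr : ∀ m : ℕ, autocorr (Icc (N + 1) (N + L)) a m =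
      ∑ n ∈ Icc (N + 1) (N + L - m), exp (2 * π * I * (f (n + m) - f n)) := fun m => by
    simp only [a, autocorr_indicator_Icc, exp_two_pi_I_mul_conj]
  have hs : ∀ m : ℕ, autocorr (Icc (N + 1) (N + L)) a m = s' m := fun m => by
    rw [hs', hcorr]
    split_ifs with hm
    · rfl
    · rw [Icc_eq_empty (by omega), sum_empty]
  have h0 : ‖autocorr (Icc (N + 1) (N + L)) a 0‖ = L := by
    simp [hcorr]
  have hsum :
      ∑ n ∈ Icc (N + 1) (N + L), a n = ∑ n ∈ Icc (N + 1) (N + L), exp (2 * π * I * f n) :=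
    sum_congr rfl fun n hn => Set.indicator_of_mem (mem_coe.2 hn) _
  have hvdc :=
    sq_mul_norm_sum_sq_le_autocorr (a := a) (fun n hn => Set.indicator_of_notMem hn _) M
  rw [hsum, h0, Nat.cast_sub (by omega), Nat.cast_add, Nat.cast_one] at hvdc
  simp_rw [hs] at hvdc
  have hM' : (0 : ℝ) < M := Nat.cast_pos.2 hM
  have hweights : ∑ m ∈ Icc 1 M, (1 - (m : ℝ) / M) * ‖s' m‖ =
      (∑ m ∈ Icc 1 M, ((M : ℝ) - m) * ‖s' m‖) / M := by
    rw [sum_div]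
    exact sum_congr rfl fun m _ => by field_simp
  rw [hweights]
  field_simp
  linarith

theorem weyl_differencing (f : ℤ → ℝ) (L M : ℕ) (hL : 0 < L) (hM : 0 < M) (N : ℤ)
    (s' : ℕ → ℂ)
    (hs' : ∀ m : ℕ, s' m =
      if m < L then
        ∑ n ∈ Finset.Icc (N + 1) (N + L - m),
          Complex.exp (2 * Real.pi * Complex.I * (f (n + m) - f n))
      else 0) :
    (‖∑ n ∈ Finset.Icc (N + 1) (N + L),
        Complex.exp (2 * Real.pi * Complex.I * (f n))‖) ^ 2 ≤
      ((L + M - 1 : ℝ) / M) *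
        (L + 2 * ∑ m ∈ Finset.Icc 1 M, (1 - (m : ℝ) / M) * ‖s' m‖) :=
  weyl_differencing_general f L M hM N s' hs'
end

section
/- For every real number t ≥ 10⁷, setting n₁ := ⌊√(t/(2π))⌋, one has |∑_{n=1}^{n₁} n^{-1/2 + it}| ≤ 2 t^{1/4} / (2π)^{1/4} − 1.417. -/
open Complex Real

/-! The bound is the trivial one: every term has modulus `n^{-1/2}`. The sum of these is
telescoped through `n^{-1/2} ≤ 2 (√(n + 1/2) - √(n - 1/2))` (concavity of the square root at
the midpoint `n`), keeping the term `n = 1` exact, which gives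
`1 + 2 √(n₁ + 1/2) - 2 √(3/2)`; finally `√(n₁ + 1/2) ≤ √n₁ + 1/(4 √n₁)`, `n₁ ≥ 400` and
`√n₁ ≤ (t / 2π)^{1/4}`. -/

lemma inv_sqrt_le_two_mul_sqrt_add_half_sub {x : ℝ} (hx : 1 / 2 ≤ x) :
    (√x)⁻¹ ≤ 2 * √(x + 1 / 2) - 2 * √(x - 1 / 2) := by
  set a := √(x + 1 / 2)
  set b := √(x - 1 / 2)
  have ha : a ^ 2 = x + 1 / 2 := sq_sqrt (by linarith)
  have hb : b ^ 2 = x - 1 / 2 := sq_sqrt (by linarith)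
  have hx' : √x ^ 2 = x := sq_sqrt (by linarith)
  have hpos : 0 < √x := sqrt_pos.mpr (by linarith)
  have hab : 0 < a + b := by positivity
  -- `2 (a - b) = 2 / (a + b)`, and `a + b ≤ 2 √x` by concavity of the square root
  have hsum : a + b ≤ 2 * √x := by
    nlinarith [sq_nonneg (a - b), sqrt_nonneg (x + 1 / 2), sqrt_nonneg (x - 1 / 2)]
  rw [inv_eq_one_div, div_le_iff₀ hpos]
  nlinarith

lemma sum_Ioc_inv_sqrt_le {M N : ℕ} (h : M ≤ N) :
    ∑ n ∈ Finset.Ioc M N, (√n)⁻¹ ≤ 2 * √(N + 1 / 2) - 2 * √(M + 1 / 2) := by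
  induction N, h using Nat.le_induction with
  | base => simp
  | succ N hMN ih =>
    rw [Finset.sum_Ioc_succ_top (by omega)]
    have := inv_sqrt_le_two_mul_sqrt_add_half_sub (x := (N + 1 : ℕ)) (by push_cast; linarith)
    push_cast at this ⊢
    rw [show (N : ℝ) + 1 - 1 / 2 = N + 1 / 2 by ring] at this
    linarith

lemma sum_Icc_inv_sqrt_le {N : ℕ} (hN : 1 ≤ N) :
    ∑ n ∈ Finset.Icc 1 N, (√n)⁻¹ ≤ 1 + 2 * √(N + 1 / 2) - 2 * √(3 / 2) := by
  rw [Finset.Icc_eq_cons_Ioc hN, Finset.sum_cons]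
  have := sum_Ioc_inv_sqrt_le hN
  norm_num at this ⊢
  linarith

lemma sqrt_add_half_le {x : ℝ} (hx : 0 < x) : √(x + 1 / 2) ≤ √x + 1 / (4 * √x) := by
  have hs : 0 < √x := sqrt_pos.mpr hx
  rw [sqrt_le_left (by positivity), add_sq, sq_sqrt hx.le]
  field_simp
  nlinarith [sq_sqrt hx.le]

lemma norm_natCast_cpow_neg_half_add_mul_I (n : ℕ) (t : ℝ) :
    ‖(n : ℂ) ^ ((-1/2 : ℂ) + t * I)‖ = (√n)⁻¹ := by
  rw [norm_natCast_cpow_of_re_ne_zero n (by simp), sqrt_eq_rpow, ← rpow_neg n.cast_nonneg]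
  norm_num

lemma sqrt_floor_sqrt_le_rpow {x : ℝ} (hx : 0 ≤ x) : √(⌊√x⌋₊ : ℝ) ≤ x ^ (1 / 4 : ℝ) := by
  calc √(⌊√x⌋₊ : ℝ) ≤ √(√x) := sqrt_le_sqrt (Nat.floor_le (sqrt_nonneg x))
    _ = x ^ (1 / 4 : ℝ) := by
      rw [sqrt_eq_rpow, sqrt_eq_rpow, ← rpow_mul hx]; norm_num

theorem main_sum_bound (t : ℝ) (ht : 10^7 ≤ t)
    (n₁ : ℕ) (hn₁ : n₁ = ⌊Real.sqrt (t / (2 * Real.pi))⌋₊) :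
    ‖∑ n ∈ Finset.Icc 1 n₁, (n : ℂ) ^ ((-1/2 : ℂ) + t * Complex.I)‖ ≤
      2 * t ^ ((1:ℝ)/4) / (2 * Real.pi) ^ ((1:ℝ)/4) - 1.417 := by
  have hπ : 0 < 2 * π := by positivity
  have h400 : 400 ≤ n₁ := by
    rw [hn₁, Nat.le_floor_iff (sqrt_nonneg _), le_sqrt' (by norm_num), le_div_iff₀ hπ]
    push_cast; nlinarith [pi_lt_four]
  have hroot : √n₁ ≤ t ^ (1 / 4 : ℝ) / (2 * π) ^ (1 / 4 : ℝ) := by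
    rw [← div_rpow (by linarith) hπ.le, hn₁]
    exact sqrt_floor_sqrt_le_rpow (by positivity)
  have h20 : 20 ≤ √n₁ := le_sqrt_of_sq_le (by norm_num; exact_mod_cast h400)
  have h32 : 1.2247 ≤ √(3 / 2) := le_sqrt_of_sq_le (by norm_num)
  have htail : 1 / (4 * √n₁) ≤ 1 / 80 := by gcongr; linarith
  calc ‖∑ n ∈ Finset.Icc 1 n₁, (n : ℂ) ^ ((-1/2 : ℂ) + t * I)‖
      ≤ ∑ n ∈ Finset.Icc 1 n₁, (√n)⁻¹ :=
        (norm_sum_le _ _).trans_eq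
          (Finset.sum_congr rfl fun n _ ↦ norm_natCast_cpow_neg_half_add_mul_I n t)
    _ ≤ 1 + 2 * √(n₁ + 1 / 2) - 2 * √(3 / 2) := sum_Icc_inv_sqrt_le (by omega)
    _ ≤ 1 + 2 * (√n₁ + 1 / (4 * √n₁)) - 2 * √(3 / 2) := by
        gcongr; exact sqrt_add_half_le (by positivity)
    _ ≤ 2 * t ^ (1 / 4 : ℝ) / (2 * π) ^ (1 / 4 : ℝ) - 1.417 := by
        rw [mul_div_assoc]; linarith
end

section
/- For all integers r₀ and R with 1 ≤ r₀ ≤ R, one has ∑_{r=r₀}^{R} 1/√(r(r+1)) ≤ 2 · arcsinh(√(R + 1/2)) − 2 · arcsinh(√(r₀ − 1/2)). -/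
open Real Set

/-! Since `2 * arsinh √t` is an antiderivative of `t ↦ 1 / √(t (t + 1))` and that function is
convex on `(0, ∞)`, its value at `r` is at most its mean over `[r - 1/2, r + 1/2]` (midpoint
Hermite–Hadamard); summing over `r` telescopes. -/

theorem ConvexOn.two_mul_mul_le_sub_of_hasDerivAt {F f : ℝ → ℝ} {x h : ℝ} (hh : 0 ≤ h)
    (hf : ConvexOn ℝ (Icc (x - h) (x + h)) f)
    (hF : ∀ t ∈ Icc (x - h) (x + h), HasDerivAt F (f t) t) :
    2 * h * f x ≤ F (x + h) - F (x - h) := by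
  have hmem : ∀ s ∈ Icc 0 h, x + s ∈ Icc (x - h) (x + h) ∧ x - s ∈ Icc (x - h) (x + h) :=
    fun s ⟨hs₀, hsh⟩ ↦ ⟨⟨by linarith, by linarith⟩, ⟨by linarith, by linarith⟩⟩
  set φ : ℝ → ℝ := fun s ↦ F (x + s) - F (x - s) - s * (2 * f x)
  have hφ : ∀ s ∈ Icc 0 h, HasDerivAt φ (f (x + s) + f (x - s) - 2 * f x) s := fun s hs ↦
    (((hF _ (hmem s hs).1).comp_const_add x s).sub ((hF _ (hmem s hs).2).comp_const_sub x s)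
      |>.sub ((hasDerivAt_id' s).mul_const (2 * f x))).congr_deriv (by ring)
  have hmid : ∀ s ∈ Icc 0 h, 2 * f x ≤ f (x + s) + f (x - s) := fun s hs ↦ by
    have := hf.2 (hmem s hs).1 (hmem s hs).2 one_half_pos.le one_half_pos.le (add_halves 1)
    rw [smul_eq_mul, smul_eq_mul, smul_eq_mul, smul_eq_mul,
      show 1 / 2 * (x + s) + 1 / 2 * (x - s) = x by ring] at this
    linarith
  have hmono : MonotoneOn φ (Icc 0 h) :=
    monotoneOn_of_hasDerivWithinAt_nonneg (convex_Icc 0 h)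
      (fun s hs ↦ (hφ s hs).continuousAt.continuousWithinAt)
      (fun s hs ↦ (hφ s (interior_subset hs)).hasDerivWithinAt)
      (fun s hs ↦ sub_nonneg.2 (hmid s (interior_subset hs)))
  have := hmono ⟨le_rfl, hh⟩ ⟨hh, le_rfl⟩ hh
  simp only [φ, add_zero, sub_zero, zero_mul] at this
  linarith

theorem antitoneOn_inv_sqrt : AntitoneOn (fun t : ℝ ↦ (√t)⁻¹) (Ioi 0) :=
  fun _ hs _ _ hst ↦ inv_anti₀ (sqrt_pos.2 hs) (sqrt_le_sqrt hst)

theorem convexOn_inv_sqrt : ConvexOn ℝ (Ioi 0) fun t : ℝ ↦ (√t)⁻¹ := by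
  have hsqrt : (√·) '' Ioi 0 ⊆ Ioi (0 : ℝ) := by
    rintro _ ⟨t, ht, rfl⟩
    exact sqrt_pos.2 ht
  have hinv : ConvexOn ℝ ((√·) '' Ioi 0) fun u : ℝ ↦ u⁻¹ := by
    refine ((convexOn_zpow (-1)).subset hsqrt ?_).congr fun u _ ↦ zpow_neg_one u
    exact (isPreconnected_Ioi.image _ continuous_sqrt.continuousOn).ordConnected.convex
  exact hinv.comp_concaveOn (strictConcaveOn_sqrt.concaveOn.subset Ioi_subset_Ici_self
    (convex_Ioi 0)) fun u hu _ _ huv ↦ inv_anti₀ (hsqrt hu) huv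

theorem convexOn_inv_sqrt_mul_add_one :
    ConvexOn ℝ (Ioi 0) fun t : ℝ ↦ (√(t * (t + 1)))⁻¹ := by
  have hshift : ConvexOn ℝ (Ioi 0) fun t : ℝ ↦ (√(t + 1))⁻¹ := by
    refine ((convexOn_inv_sqrt.translate_right 1).subset (fun t ht ↦ ?_) (convex_Ioi 0)).congr
      fun t _ ↦ by simp [add_comm]
    simp only [mem_preimage, mem_Ioi] at ht ⊢
    linarith
  have hshift_anti : AntitoneOn (fun t : ℝ ↦ (√(t + 1))⁻¹) (Ioi 0) := fun s hs t ht hst ↦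
    antitoneOn_inv_sqrt (mem_Ioi.2 (by linarith [mem_Ioi.1 hs]))
      (mem_Ioi.2 (by linarith [mem_Ioi.1 ht])) (by linarith)
  refine (convexOn_inv_sqrt.mul hshift (fun t _ ↦ by positivity) (fun t _ ↦ by positivity)
    (antitoneOn_inv_sqrt.monovaryOn hshift_anti)).congr fun t ht ↦ ?_
  rw [Pi.mul_apply, sqrt_mul (le_of_lt ht), mul_inv]

theorem hasDerivAt_two_mul_arsinh_sqrt {t : ℝ} (ht : 0 < t) :
    HasDerivAt (fun t ↦ 2 * arsinh √t) (√(t * (t + 1)))⁻¹ t := by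
  refine (((hasDerivAt_arsinh √t).comp t (hasDerivAt_sqrt ht.ne')).const_mul 2).congr_deriv ?_
  rw [sq_sqrt ht.le, sqrt_mul ht.le, add_comm 1 t]
  field_simp

theorem Finset.sum_Icc_sub_sub_one {M : Type*} [AddCommGroup M] (G : ℤ → M) {a b : ℤ}
    (hab : a ≤ b) : ∑ r ∈ Finset.Icc a b, (G r - G (r - 1)) = G b - G (a - 1) := by
  induction b, hab using Int.leInduction with
  | base => simp
  | succ b hab ih =>
    rw [← Finset.insert_Icc_right_eq_Icc_add_one (by omega), Finset.sum_insert (by simp), ih]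
    simp

theorem inv_sqrt_mul_add_one_le_two_mul_arsinh_sqrt_sub {x : ℝ} (hx : 1 / 2 < x) :
    (√(x * (x + 1)))⁻¹ ≤ 2 * arsinh √(x + 1 / 2) - 2 * arsinh √(x - 1 / 2) := by
  have hpos : Icc (x - 1 / 2) (x + 1 / 2) ⊆ Ioi 0 := fun t ht ↦ mem_Ioi.2 (by linarith [ht.1])
  have hconv := convexOn_inv_sqrt_mul_add_one.subset hpos (convex_Icc _ _)
  have := hconv.two_mul_mul_le_sub_of_hasDerivAt (by norm_num) fun t ht ↦
    hasDerivAt_two_mul_arsinh_sqrt (hpos ht)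
  linarith

theorem sum_inv_sqrt_le_arsinh (r₀ R : ℤ) (h1 : 1 ≤ r₀) (h2 : r₀ ≤ R) :
    ∑ r ∈ Finset.Icc r₀ R, 1 / Real.sqrt ((r : ℝ) * ((r : ℝ) + 1)) ≤
      2 * Real.arsinh (Real.sqrt ((R : ℝ) + 1/2))
        - 2 * Real.arsinh (Real.sqrt ((r₀ : ℝ) - 1/2)) := by
  set G : ℤ → ℝ := fun r ↦ 2 * arsinh √((r : ℝ) + 1 / 2)
  have hG (r : ℤ) : G (r - 1) = 2 * arsinh √((r : ℝ) - 1 / 2) := by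
    simp only [G]
    push_cast
    ring_nf
  calc ∑ r ∈ Finset.Icc r₀ R, 1 / √((r : ℝ) * ((r : ℝ) + 1))
      ≤ ∑ r ∈ Finset.Icc r₀ R, (G r - G (r - 1)) := Finset.sum_le_sum fun r hr ↦ by
        have hr : (1 : ℝ) ≤ r := by exact_mod_cast h1.trans (Finset.mem_Icc.1 hr).1
        rw [one_div, hG]
        exact inv_sqrt_mul_add_one_le_two_mul_arsinh_sqrt_sub (by linarith)
    _ = G R - G (r₀ - 1) := Finset.sum_Icc_sub_sub_one G h2
    _ = _ := by rw [hG]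
end

section
/- Let m, r, K, L be positive integers and t, K₀ positive real numbers with K ≥ K₀ > 1 and m < L ≤ K. Define g(x) := (t/(2π)) · log(1 + m/(rK + x)), W := π(r+1)³K³/t, λ := (1+r)³/r³, and μ := (1/2) λ^{2/3} (1 + 1/((1 − K₀^{-1}) λ^{1/3})). Then g'(L − 1 − m) − g'(0) ≤ (mK/W) · μ. -/
open Real

set_option maxHeartbeats 1000000 in
theorem gprime_diff_bound
    (m r K L : ℕ) (hm : 0 < m) (hr : 0 < r) (hK : 0 < K) (hL : 0 < L)
    (t K₀ : ℝ) (ht : 0 < t) (hK₀ : 1 < K₀) (hKK₀ : K₀ ≤ K)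
    (hmL : m < L) (hLK : L ≤ K)
    (g : ℝ → ℝ) (hg : g = fun x => t / (2 * Real.pi) * Real.log (1 + m / (r * K + x)))
    (W : ℝ) (hW : W = Real.pi * ((r : ℝ) + 1) ^ 3 * K ^ 3 / t)
    (lam : ℝ) (hlam : lam = (1 + (r : ℝ)) ^ 3 / r ^ 3)
    (μ : ℝ) (hμ : μ = (1/2) * lam ^ ((2:ℝ)/3) *
      (1 + 1 / ((1 - K₀⁻¹) * lam ^ ((1:ℝ)/3)))) :
    deriv g ((L : ℝ) - 1 - m) - deriv g 0 ≤ (m * K / W) * μ := by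
  have hπ : (0:ℝ) < Real.pi := Real.pi_pos
  have hrR : (1:ℝ) ≤ r := by exact_mod_cast hr
  have hrR0 : (0:ℝ) < r := by linarith
  have hmR : (1:ℝ) ≤ m := by exact_mod_cast hm
  have hKR : (1:ℝ) < K := lt_of_lt_of_le hK₀ hKK₀
  have hKR0 : (0:ℝ) < K := by linarith
  have hLm : (m:ℝ) + 1 ≤ L := by exact_mod_cast hmL
  have hLKR : (L:ℝ) ≤ K := by exact_mod_cast hLK
  set ε : ℝ := 1 - K₀⁻¹ with hεdef
  have hε : 0 < ε := by
    rw [hεdef]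
    have : K₀⁻¹ < 1 := by
      rw [inv_lt_one_iff₀]; right; exact hK₀
    linarith
  have hε1 : ε ≤ 1 := by
    have : 0 < K₀⁻¹ := by positivity
    rw [hεdef]; linarith
  -- derivative formula
  have hderiv : ∀ x : ℝ, 0 < (r:ℝ) * K + x →
      deriv g x = t / (2 * Real.pi) * (-(m:ℝ) / (((r:ℝ)*K + x) * ((r:ℝ)*K + x + m))) := by
    intro x hx
    have hne : ((r:ℝ)*K + x) ≠ 0 := ne_of_gt hx
    have hpos : 0 < 1 + (m:ℝ) / ((r:ℝ)*K + x) := by positivity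
    have h1 : HasDerivAt (fun y : ℝ => (r:ℝ)*K + y) 1 x := by
      simpa using (hasDerivAt_id x).const_add ((r:ℝ)*K)
    have h2 := h1.inv hne
    have h3 := h2.const_mul (m:ℝ)
    have h4 := (h3.const_add 1)
    have h4' : HasDerivAt (fun y : ℝ => 1 + (m:ℝ) / ((r:ℝ)*K + y))
        ((m:ℝ) * (-1 / ((r:ℝ)*K + x) ^ 2)) x := by
      simpa [div_eq_mul_inv] using h4
    have hval : (1:ℝ) + (m:ℝ) / ((r:ℝ)*K + x) ≠ 0 := ne_of_gt hpos
    have h5 := h4'.log hval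
    have h6 := h5.const_mul (t / (2 * Real.pi))
    have h7 : deriv g x = t / (2 * Real.pi) *
        ((m:ℝ) * (-1 / ((r:ℝ)*K + x) ^ 2) / (1 + (m:ℝ) / ((r:ℝ)*K + x))) := by
      rw [hg]; exact h6.deriv
    rw [h7]
    have hmm : ((r:ℝ)*K + x + m) ≠ 0 := by positivity
    field_simp
  have hX : (0:ℝ) ≤ (L:ℝ) - 1 - m := by linarith
  have hA : (0:ℝ) < (r:ℝ) * K := by positivity
  have hd1 := hderiv ((L:ℝ) - 1 - m) (by linarith)
  have hd0 := hderiv 0 (by linarith)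
  simp only [add_zero] at hd0
  rw [hd1, hd0]
  -- abbreviations
  set c : ℝ := t / (2 * Real.pi) with hc
  have hc0 : 0 < c := by positivity
  set A : ℝ := (r:ℝ) * K with hAdef
  set B : ℝ := A + ((L:ℝ) - 1 - m) with hBdef
  have hB : 0 < B := by rw [hBdef]; linarith
  have hBm : B + m ≤ ((r:ℝ) + 1) * K := by
    rw [hBdef]; nlinarith
  have hBm0 : 0 < B + m := by linarith
  -- rpow computations
  have hbase : (0:ℝ) < (1 + (r:ℝ)) / r := by positivity
  have hlam3 : lam = ((1 + (r:ℝ)) / r) ^ (3:ℕ) := by rw [hlam, div_pow]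
  have h13 : lam ^ ((1:ℝ)/3) = (1 + (r:ℝ)) / r := by
    rw [hlam3, ← Real.rpow_natCast ((1 + (r:ℝ))/r) 3, ← Real.rpow_mul hbase.le]
    norm_num
  have h23 : lam ^ ((2:ℝ)/3) = ((1 + (r:ℝ)) / r) ^ (2:ℕ) := by
    rw [hlam3, ← Real.rpow_natCast ((1 + (r:ℝ))/r) 3, ← Real.rpow_mul hbase.le,
      show ((3:ℕ):ℝ) * (2/3) = ((2:ℕ):ℝ) by norm_num, Real.rpow_natCast]
  -- RHS expression
  have hRHS : (↑m * ↑K / W) * μ =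
      c * m * (1 / ((r:ℝ)^2 * (r+1) * K^2) + 1 / (ε * r * (r+1)^2 * K^2)) := by
    rw [hW, hμ, h13, h23, hc]
    have h1 : ((r:ℝ) + 1) ≠ 0 := by positivity
    have h2 : ε ≠ 0 := ne_of_gt hε
    field_simp
    ring
  rw [hRHS]
  -- main bound chain
  have key1 : c * ((-(m:ℝ)) / (B * (B + m))) - c * ((-(m:ℝ)) / (A * (A + m)))
      ≤ c * m * (1 / A^2 - 1 / (((r:ℝ)+1)*K)^2) := by
    have e1 : c * ((-(m:ℝ)) / (B * (B + m))) - c * ((-(m:ℝ)) / (A * (A + m)))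
        = c * m * (1 / (A * (A + m)) - 1 / (B * (B + m))) := by
      field_simp
      ring
    rw [e1]
    have hAm : 0 < A + (m:ℝ) := by linarith
    have i1 : 1 / (A * (A + m)) ≤ 1 / A^2 := by
      apply one_div_le_one_div_of_le (by positivity)
      nlinarith
    have i2 : 1 / (((r:ℝ)+1)*K)^2 ≤ 1 / (B * (B + m)) := by
      apply one_div_le_one_div_of_le (by positivity)
      nlinarith
    have : 1 / (A * (A + m)) - 1 / (B * (B + m)) ≤ 1 / A^2 - 1 / (((r:ℝ)+1)*K)^2 := by
      linarith
    exact mul_le_mul_of_nonneg_left this (by positivity)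
  refine le_trans key1 ?_
  -- partial fraction identity + epsilon slack
  have e2 : 1 / A^2 - 1 / (((r:ℝ)+1)*K)^2
      = 1 / ((r:ℝ)^2 * (r+1) * K^2) + 1 / ((r:ℝ) * (r+1)^2 * K^2) := by
    rw [hAdef]
    field_simp
    ring
  have i3 : 1 / ((r:ℝ) * (r+1)^2 * K^2) ≤ 1 / (ε * r * (r+1)^2 * K^2) := by
    apply one_div_le_one_div_of_le (by positivity)
    nlinarith [mul_le_mul_of_nonneg_right hε1
      (show (0:ℝ) ≤ (r:ℝ) * (r+1)^2 * K^2 by positivity)]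
  rw [e2]
  exact mul_le_mul_of_nonneg_left (by linarith) (by positivity)
end
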